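/- arXiv:2001.02889 — 2 statements merged into one kernel-verified Lean document; each statement's English description precedes it below -/
import Mathlib

section
/- Let P be a probability measure on a finite type Δ (a probability mass function), and let E be a finite family of subsets of Δ. Then there exists a probability mass function s on Δ such that s assigns the same probability as P to every set in E and to Δ itself, and the support of s has cardinality at most |E| + 1. -/
theorem small_support_pmf {Δ : Type*} [Fintype Δ] [DecidableEq Δ]
    (p : Δ → ℝ) (hp : ∀ δ, 0 ≤ p δ) (hp1 : ∑ δ, p δ = 1)
    (E : Finset (Finset Δ)) :
    ∃ s : Δ → ℝ, (∀ δ, 0 ≤ s δ) ∧ (∑ δ, s δ = 1) ∧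
      (∀ A ∈ E, ∑ δ ∈ A, s δ = ∑ δ ∈ A, p δ) ∧
      (Finset.univ.filter fun δ => s δ ≠ 0).card ≤ E.card + 1 := by
  classical
  set V := ({A // A ∈ E} → ℝ)
  set f : Δ → V := fun δ A => if δ ∈ (A : Finset Δ) then (1 : ℝ) else 0 with hf
  have hx : (∑ δ, p δ • f δ) ∈ convexHull ℝ (Set.range f) := by
    have := Finset.centerMass_mem_convexHull (Finset.univ : Finset Δ)
      (w := p) (z := f) (s := Set.range f)
      (fun δ _ => hp δ) (by rw [hp1]; norm_num) (fun δ _ => Set.mem_range_self δ)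
    rwa [Finset.centerMass_eq_of_sum_1 _ _ hp1] at this
  obtain ⟨ι, hι, z, w, hzr, hai, hw0, hw1, hwz⟩ :=
    eq_pos_convex_span_of_mem_convexHull hx
  have hcard : Fintype.card ι ≤ E.card + 1 := by
    have h1 := hai.card_le_finrank_succ
    have h2 : Module.finrank ℝ ({A // A ∈ E} → ℝ) = E.card := by
      simp [V, Module.finrank_fintype_fun_eq_card]
    exact h1.trans (Nat.add_le_add_right ((Submodule.finrank_le _).trans_eq h2) 1)
  choose g hg using fun i => (hzr (Set.mem_range_self i) : z i ∈ Set.range f)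
  refine ⟨fun δ => ∑ i, if g i = δ then w i else 0, ?_, ?_, ?_, ?_⟩
  · intro δ
    exact Finset.sum_nonneg fun i _ => by split <;> simp [le_of_lt (hw0 i)]
  · rw [Finset.sum_comm]
    simpa using hw1
  · intro A hA
    have key : ∀ i, (if g i ∈ A then w i else 0) = w i * z i ⟨A, hA⟩ := by
      intro i
      rw [← hg i, hf]
      by_cases h : g i ∈ A <;> simp [h]
    rw [Finset.sum_comm]
    have lhs : ∀ i, (∑ δ ∈ A, if g i = δ then w i else 0) = if g i ∈ A then w i else 0 := by
      intro i; exact Finset.sum_ite_eq A (g i) (fun _ => w i)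
    simp_rw [lhs, key]
    have := congrFun hwz ⟨A, hA⟩
    simp only [V, Finset.sum_apply, Pi.smul_apply, smul_eq_mul] at this
    rw [this]
    have : ∀ δ, p δ * f δ ⟨A, hA⟩ = if δ ∈ A then p δ else 0 := by
      intro δ; by_cases h : δ ∈ A <;> simp [hf, h]
    simp_rw [f] at this ⊢
    simp_rw [this]
    rw [Finset.sum_ite_mem, Finset.univ_inter]
  · have hsub : (Finset.univ.filter fun δ => (∑ i, if g i = δ then w i else 0) ≠ 0)
        ⊆ Finset.image g Finset.univ := by
      intro δ hδ
      simp only [Finset.mem_filter] at hδ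
      by_contra hc
      apply hδ.2
      apply Finset.sum_eq_zero
      intro i _
      rw [if_neg]
      intro h
      exact hc (Finset.mem_image.mpr ⟨i, Finset.mem_univ i, h⟩)
    calc _ ≤ (Finset.image g Finset.univ).card := Finset.card_le_card hsub
      _ ≤ Fintype.card ι := by convert Finset.card_image_le (s := Finset.univ) (f := g); convert (Finset.card_univ (α := ι)).symm
      _ ≤ E.card + 1 := hcard
end

section
/- Let V be a finite set and ⤳ a directed acyclic (well-founded) relation on V. Let ≺ be any topological (linear) order extending ⤳. If a structural causal model over V has influence relation contained in ⤳, and every variable assignment has positive probability, then the model is recursive with respect to ≺. -/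
theorem topological_order_recursive
    {V : Type*} [Fintype V] [DecidableEq V] [LinearOrder V]
    {U : Type*} (Val : V → Type*) [∀ v, Fintype (Val v)]
    (E : V → V → Prop) (hE : ∀ X Y, E X Y → X < Y)
    (f : ∀ v : V, (∀ w : V, Val w) → U → Val v)
    (hInfl : ∀ X Y : V,
      (∃ (v₁ v₂ : ∀ w, Val w) (u : U),
        (∀ w, w ≠ X → v₁ w = v₂ w) ∧ f Y v₁ u ≠ f Y v₂ u) → E X Y)
    (P : U → ℝ) (hP : ∀ u, 0 < P u) :
    ∀ (v : V) (u : U) (a b : ∀ w, Val w),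
      (∀ w, w < v → a w = b w) → f v a u = f v b u := by
  classical
  intro v u a b hab
  -- induct on the number of coordinates where a and b disagree
  set s := Finset.univ.filter (fun w => a w ≠ b w) with hs
  clear_value s
  induction s using Finset.strongInduction generalizing a with
  | _ s ih =>
    by_cases hemp : s = ∅
    · have : a = b := by
        funext w
        by_contra hw
        have : w ∈ s := by
          rw [hs]; simp [hw]
        simp [hemp] at this
      rw [this]
    · obtain ⟨x, hx⟩ := Finset.nonempty_iff_ne_empty.mpr hemp
      have hxab : a x ≠ b x := by
        rw [hs] at hx; simpa using hx
      have hxv : ¬ x < v := fun h => hxab (hab x h)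
      set a' := Function.update a x (b x) with ha'
      have h1 : f v a u = f v a' u := by
        by_contra hne
        exact hxv (hE x v (hInfl x v ⟨a, a', u,
          fun w hw => (Function.update_of_ne hw _ _).symm, hne⟩))
      have hab' : ∀ w, w < v → a' w = b w := by
        intro w hw
        rcases eq_or_ne w x with rfl | hwx
        · exact absurd hw hxv
        · rw [ha', Function.update_of_ne hwx]; exact hab w hw
      have hsub : Finset.univ.filter (fun w => a' w ≠ b w) ⊂ s := by
        constructor
        · intro w hw
          simp only [Finset.mem_filter, Finset.mem_univ, true_and] at hw ⊢
          rw [hs]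
          simp only [Finset.mem_filter, Finset.mem_univ, true_and]
          rcases eq_or_ne w x with rfl | hwx
          · exact hxab
          · rwa [ha', Function.update_of_ne hwx] at hw
        · intro hsup
          have := hsup hx
          simp only [Finset.mem_filter, Finset.mem_univ, true_and, ha',
            Function.update_self] at this
          exact this rfl
      rw [h1]
      exact ih _ hsub a' hab' rfl
end
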